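/- arXiv:1802.00488 — 3 statements merged into one kernel-verified Lean document; each statement's English description precedes it below -/
import Mathlib

section
/- Let R be a ℤ₊-ring with basis {b_γ : γ ∈ Γ}. A proper Serre ideal P of R is a Serre prime ideal (i.e., for all Serre ideals I, J of R, IJ ⊆ P implies I ⊆ P or J ⊆ P) if and only if for all α, β ∈ Γ, b_α R b_β ⊆ P implies b_α ∈ P or b_β ∈ P. -/
variable {Γ R : Type*}

/-- The positive cone `R₊` of a `ℤ₊`-ring with basis `b`. -/
def ZPos [NonUnitalRing R] (b : Module.Basis Γ ℤ R) : Set R :=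
  {r | ∀ γ : Γ, 0 ≤ b.repr r γ}

/-- The structure constants of the multiplication with respect to `b` are nonnegative,
i.e. `(R, b)` is a `ℤ₊`-ring. -/
def PosBasis [NonUnitalRing R] (b : Module.Basis Γ ℤ R) : Prop :=
  ∀ α β γ : Γ, 0 ≤ b.repr (b α * b β) γ

/-- A Serre ideal: a two-sided ideal of the form `⨁_{γ ∈ Γ'} ℤ b_γ`. -/
def IsSerreIdeal [NonUnitalRing R] (b : Module.Basis Γ ℤ R) (I : Set R) : Prop :=
  (∃ Γ' : Set Γ, I = ↑(Submodule.span ℤ (⇑b '' Γ'))) ∧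
  (∀ r ∈ I, ∀ s : R, s * r ∈ I) ∧
  (∀ r ∈ I, ∀ s : R, r * s ∈ I)

/-- A Serre prime ideal: a proper Serre ideal `P` such that for all Serre ideals
`I, J`, `IJ ⊆ P` implies `I ⊆ P` or `J ⊆ P`. -/
def IsSerrePrime [NonUnitalRing R] (b : Module.Basis Γ ℤ R) (P : Set R) : Prop :=
  IsSerreIdeal b P ∧ P ≠ Set.univ ∧
    ∀ I J : Set R, IsSerreIdeal b I → IsSerreIdeal b J →
      (∀ x ∈ I, ∀ y ∈ J, x * y ∈ P) → I ⊆ P ∨ J ⊆ P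

/-! A Serre ideal not contained in `P` contains a basis vector outside `P`; this gives the
implication from the basis condition to primality.

Conversely, given `b α R b β ⊆ P`, one needs Serre ideals `I ∋ b α` and `J ∋ b β` with `IJ ⊆ P`.
Take `J` spanned by the basis vectors `b δ` with `b α b δ ∈ P` and `b α R₊ b δ ⊆ P`, and `I`
spanned by the `b γ` with `b γ y ∈ P` for every positive `y` meeting the condition defining `J`.
Positivity of the structure constants makes these transporters downward closed, and a downward
closed set stable under multiplication by basis vectors spans a Serre ideal. As `R` need not be
unital, `b α b β ∈ P` is needed as well; it follows from the same argument applied to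
`v = b α b β`, for which `v R v ⊆ P` and `v v ∈ P`. -/

section ZPos

variable [NonUnitalRing R] (b : Module.Basis Γ ℤ R)

lemma basis_mem_zPos (γ : Γ) : b γ ∈ ZPos b := by
  classical
  intro δ
  rw [b.repr_self, Finsupp.single_apply]
  split_ifs <;> norm_num

lemma repr_mul_apply (x y : R) (ε : Γ) :
    b.repr (x * y) ε = ∑ μ ∈ (b.repr x).support, ∑ ν ∈ (b.repr y).support,
      b.repr x μ * b.repr y ν * b.repr (b μ * b ν) ε := by
  conv_lhs => rw [show x * y = LinearMap.mul ℤ R x y from rfl,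
    ← LinearMap.sum_repr_mul_repr_mul b b x y]
  simp only [Finsupp.sum, map_sum, Finsupp.coe_finsetSum, Finset.sum_apply,
    LinearMap.mul_apply', map_zsmul, Finsupp.smul_apply, smul_eq_mul, mul_assoc]

variable {b}

lemma mul_mem_zPos (hpos : PosBasis b) {x y : R} (hx : x ∈ ZPos b) (hy : y ∈ ZPos b) :
    x * y ∈ ZPos b := fun ε => by
  rw [repr_mul_apply]
  exact Finset.sum_nonneg fun μ _ => Finset.sum_nonneg fun ν _ =>
    mul_nonneg (mul_nonneg (hx μ) (hy ν)) (hpos μ ν ε)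

lemma sub_basis_mem_zPos {x : R} (hx : x ∈ ZPos b) {γ : Γ} (hγ : b.repr x γ ≠ 0) :
    x - b γ ∈ ZPos b := by
  classical
  intro δ
  rw [map_sub, Finsupp.sub_apply, b.repr_self, Finsupp.single_apply]
  split_ifs with h
  · subst h
    have := hx γ
    omega
  · simpa using hx δ

def IsDownwardClosed (b : Module.Basis Γ ℤ R) (S : Set R) : Prop :=
  ∀ ⦃x y : R⦄, x ∈ ZPos b → y - x ∈ ZPos b → y ∈ S → x ∈ S

lemma isDownwardClosed_span (s : Set Γ) :
    IsDownwardClosed b (Submodule.span ℤ (b '' s) : Set R) := by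
  intro x y hx hxy hy
  rw [SetLike.mem_coe, b.mem_span_image] at hy ⊢
  intro γ hγ
  apply hy
  have := hx γ
  have := hxy γ
  simp only [Finset.mem_coe, Finsupp.mem_support_iff, map_sub, Finsupp.sub_apply] at *
  omega

end ZPos

lemma mul_mem_of_mem_span [NonUnitalNonAssocRing R] {M : Submodule ℤ R} {S T : Set R}
    (h : ∀ s ∈ S, ∀ t ∈ T, s * t ∈ M) {x y : R} (hx : x ∈ Submodule.span ℤ S)
    (hy : y ∈ Submodule.span ℤ T) : x * y ∈ M := by
  induction hx, hy using Submodule.span_induction₂ with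
  | mem_mem x y hx hy => exact h x hx y hy
  | zero_left => simp
  | zero_right => simp
  | add_left _ _ _ _ _ _ h₁ h₂ => simpa [add_mul] using M.add_mem h₁ h₂
  | add_right _ _ _ _ _ _ h₁ h₂ => simpa [mul_add] using M.add_mem h₁ h₂
  | smul_left n _ _ _ _ h => simpa [smul_mul_assoc] using M.smul_mem n h
  | smul_right n _ _ _ _ h => simpa [mul_smul_comm] using M.smul_mem n h

section SerreIdeal

variable [NonUnitalRing R] {b : Module.Basis Γ ℤ R}

lemma IsSerreIdeal.isDownwardClosed {P : Set R} (hP : IsSerreIdeal b P) :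
    IsDownwardClosed b P := by
  obtain ⟨⟨ΓP, rfl⟩, -⟩ := hP
  exact isDownwardClosed_span ΓP

lemma IsSerreIdeal.exists_basis_mem_notMem {I P : Set R} (hI : IsSerreIdeal b I)
    (hP : IsSerreIdeal b P) (h : ¬I ⊆ P) : ∃ γ, b γ ∈ I ∧ b γ ∉ P := by
  obtain ⟨⟨ΓI, rfl⟩, -⟩ := hI
  obtain ⟨⟨ΓP, rfl⟩, -⟩ := hP
  by_contra! hc
  exact h (Submodule.span_le.mpr fun _ ⟨γ, hγ, hγb⟩ =>
    hγb ▸ hc γ (Submodule.subset_span ⟨γ, hγ, rfl⟩))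

def basisSpan (b : Module.Basis Γ ℤ R) (S : Set R) : Submodule ℤ R :=
  Submodule.span ℤ (b '' {γ | b γ ∈ S})

lemma mem_basisSpan {S : Set R} (hS : IsDownwardClosed b S) {x : R} (hx : x ∈ ZPos b)
    (hxS : x ∈ S) : x ∈ basisSpan b S := by
  rw [basisSpan, b.mem_span_image]
  intro γ hγ
  exact hS (basis_mem_zPos b γ) (sub_basis_mem_zPos hx (Finsupp.mem_support_iff.mp hγ)) hxS

lemma isSerreIdeal_basisSpan (hpos : PosBasis b) {S : Set R} (hS : IsDownwardClosed b S)
    (hleft : ∀ γ μ, b γ ∈ S → b μ * b γ ∈ S) (hright : ∀ γ μ, b γ ∈ S → b γ * b μ ∈ S) :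
    IsSerreIdeal b (basisSpan b S) := by
  refine ⟨⟨_, rfl⟩, fun r hr s => ?_, fun r hr s => ?_⟩
  · refine mul_mem_of_mem_span ?_ (b.mem_span s) hr
    rintro _ ⟨μ, rfl⟩ _ ⟨γ, hγ, rfl⟩
    exact mem_basisSpan hS (mul_mem_zPos hpos (basis_mem_zPos b μ) (basis_mem_zPos b γ))
      (hleft γ μ hγ)
  · refine mul_mem_of_mem_span ?_ hr (b.mem_span s)
    rintro _ ⟨γ, hγ, rfl⟩ _ ⟨μ, rfl⟩
    exact mem_basisSpan hS (mul_mem_zPos hpos (basis_mem_zPos b γ) (basis_mem_zPos b μ))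
      (hright γ μ hγ)

lemma isDownwardClosed_rightTransporter (hpos : PosBasis b) {P : Set R} (hP : IsSerreIdeal b P)
    {X : Set R} (hX : X ⊆ ZPos b) :
    IsDownwardClosed b {y | ∀ x ∈ X, x * y ∈ P} := by
  intro y' y hy' hyy' hy x hx
  refine hP.isDownwardClosed (mul_mem_zPos hpos (hX hx) hy') ?_ (hy x hx)
  simpa [mul_sub] using mul_mem_zPos hpos (hX hx) hyy'

lemma isDownwardClosed_leftTransporter (hpos : PosBasis b) {P : Set R} (hP : IsSerreIdeal b P)
    {Y : Set R} (hY : Y ⊆ ZPos b) :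
    IsDownwardClosed b {x | ∀ y ∈ Y, x * y ∈ P} := by
  intro x' x hx' hxx' hx y hy
  refine hP.isDownwardClosed (mul_mem_zPos hpos hx' (hY hy)) ?_ (hx y hy)
  simpa [sub_mul] using mul_mem_zPos hpos hxx' (hY hy)

lemma isSerreIdeal_basisSpan_rightTransporter (hpos : PosBasis b) {P : Set R}
    (hP : IsSerreIdeal b P) {X : Set R} (hX : X ⊆ ZPos b)
    (hXmul : ∀ x ∈ X, ∀ μ, x * b μ ∈ X) :
    IsSerreIdeal b (basisSpan b {y | ∀ x ∈ X, x * y ∈ P}) :=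
  isSerreIdeal_basisSpan hpos (isDownwardClosed_rightTransporter hpos hP hX)
    (fun γ μ hγ x hx => by simpa [mul_assoc] using hγ _ (hXmul x hx μ))
    (fun γ μ hγ x hx => by simpa [mul_assoc] using hP.2.2 _ (hγ x hx) (b μ))

lemma isSerreIdeal_basisSpan_leftTransporter (hpos : PosBasis b) {P : Set R}
    (hP : IsSerreIdeal b P) {Y : Set R} (hY : Y ⊆ ZPos b)
    (hYmul : ∀ y ∈ Y, ∀ μ, b μ * y ∈ Y) :
    IsSerreIdeal b (basisSpan b {x | ∀ y ∈ Y, x * y ∈ P}) :=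
  isSerreIdeal_basisSpan hpos (isDownwardClosed_leftTransporter hpos hP hY)
    (fun γ μ hγ y hy => by simpa [mul_assoc] using hP.2.1 _ (hγ y hy) (b μ))
    (fun γ μ hγ y hy => by simpa [mul_assoc] using hγ _ (hYmul y hy μ))

lemma exists_isSerreIdeal_mul_subset (hpos : PosBasis b) {P : Set R} (hP : IsSerreIdeal b P)
    {a c : R} (ha : a ∈ ZPos b) (hc : c ∈ ZPos b)
    (hac : a * c ∈ P) (harc : ∀ r ∈ ZPos b, a * r * c ∈ P) :
    ∃ I J : Set R, IsSerreIdeal b I ∧ IsSerreIdeal b J ∧ a ∈ I ∧ c ∈ J ∧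
      ∀ x ∈ I, ∀ y ∈ J, x * y ∈ P := by
  set X : Set R := {x | x = a ∨ ∃ r ∈ ZPos b, x = a * r}
  have hX : X ⊆ ZPos b := by
    rintro _ (rfl | ⟨r, hr, rfl⟩)
    exacts [ha, mul_mem_zPos hpos ha hr]
  have hXmul : ∀ x ∈ X, ∀ μ, x * b μ ∈ X := by
    rintro _ (rfl | ⟨r, hr, rfl⟩) μ
    · exact Or.inr ⟨b μ, basis_mem_zPos b μ, rfl⟩
    · exact Or.inr ⟨r * b μ, mul_mem_zPos hpos hr (basis_mem_zPos b μ), mul_assoc _ _ _⟩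
  set Y : Set R := {y | y ∈ ZPos b ∧ ∀ x ∈ X, x * y ∈ P}
  have hYmul : ∀ y ∈ Y, ∀ μ, b μ * y ∈ Y := fun y hy μ =>
    ⟨mul_mem_zPos hpos (basis_mem_zPos b μ) hy.1,
      fun x hx => by simpa [mul_assoc] using hy.2 _ (hXmul x hx μ)⟩
  refine ⟨basisSpan b {x | ∀ y ∈ Y, x * y ∈ P}, basisSpan b {y | ∀ x ∈ X, x * y ∈ P},
    isSerreIdeal_basisSpan_leftTransporter hpos hP (fun _ hy => hy.1) hYmul,
    isSerreIdeal_basisSpan_rightTransporter hpos hP hX hXmul,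
    mem_basisSpan (isDownwardClosed_leftTransporter hpos hP fun _ hy => hy.1) ha
      fun y hy => hy.2 a (Or.inl rfl),
    mem_basisSpan (isDownwardClosed_rightTransporter hpos hP hX) hc ?_, fun x hx y hy => ?_⟩
  · rintro _ (rfl | ⟨r, hr, rfl⟩)
    exacts [hac, harc r hr]
  · obtain ⟨⟨ΓP, rfl⟩, -⟩ := hP
    refine mul_mem_of_mem_span ?_ hx hy
    rintro _ ⟨γ, hγ, rfl⟩ _ ⟨δ, hδ, rfl⟩
    exact hγ (b δ) ⟨basis_mem_zPos b δ, hδ⟩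

lemma mem_or_mem_of_mul_mem (hpos : PosBasis b) {P : Set R} (hP : IsSerreIdeal b P)
    (hprime : ∀ I J : Set R, IsSerreIdeal b I → IsSerreIdeal b J →
      (∀ x ∈ I, ∀ y ∈ J, x * y ∈ P) → I ⊆ P ∨ J ⊆ P)
    {a c : R} (ha : a ∈ ZPos b) (hc : c ∈ ZPos b)
    (hac : a * c ∈ P) (harc : ∀ r ∈ ZPos b, a * r * c ∈ P) : a ∈ P ∨ c ∈ P :=
  let ⟨I, J, hI, hJ, haI, hcJ, hIJ⟩ := exists_isSerreIdeal_mul_subset hpos hP ha hc hac harc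
  (hprime I J hI hJ hIJ).imp (· haI) (· hcJ)

end SerreIdeal

theorem serrePrime_iff_basis_condition_general
    [NonUnitalRing R] (b : Module.Basis Γ ℤ R) (hpos : PosBasis b)
    (P : Set R) (hP : IsSerreIdeal b P) :
    (∀ I J : Set R, IsSerreIdeal b I → IsSerreIdeal b J →
        (∀ x ∈ I, ∀ y ∈ J, x * y ∈ P) → I ⊆ P ∨ J ⊆ P) ↔
      (∀ α β : Γ, (∀ r : R, b α * r * b β ∈ P) → b α ∈ P ∨ b β ∈ P) := by
  refine ⟨fun hprime α β hαβ => ?_, fun hbasis I J hI hJ hIJ => ?_⟩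
  · have hα := basis_mem_zPos b α
    have hβ := basis_mem_zPos b β
    have hv : b α * b β ∈ P := by
      have hv := mul_mem_zPos hpos hα hβ
      refine (mem_or_mem_of_mul_mem hpos hP hprime hv hv ?_ fun r _ => ?_).elim id id
      · simpa [mul_assoc] using hαβ (b β * b α)
      · simpa [mul_assoc] using hαβ (b β * r * b α)
    exact mem_or_mem_of_mul_mem hpos hP hprime hα hβ hv fun r _ => hαβ r
  · by_contra! h
    obtain ⟨γ, hγI, hγP⟩ := hI.exists_basis_mem_notMem hP h.1
    obtain ⟨δ, hδJ, hδP⟩ := hJ.exists_basis_mem_notMem hP h.2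
    exact (hbasis γ δ fun r => hIJ _ (hI.2.2 _ hγI r) _ hδJ).elim hγP hδP

/-- a proper Serre ideal `P` of a `ℤ₊`-ring is Serre prime iff
for all basis elements `b α, b β`, `b_α R b_β ⊆ P` implies `b_α ∈ P` or `b_β ∈ P`. -/
theorem serrePrime_iff_basis_condition
    [NonUnitalRing R] (b : Module.Basis Γ ℤ R) (hpos : PosBasis b)
    (P : Set R) (hP : IsSerreIdeal b P) (hproper : P ≠ Set.univ) :
    (∀ I J : Set R, IsSerreIdeal b I → IsSerreIdeal b J →
        (∀ x ∈ I, ∀ y ∈ J, x * y ∈ P) → I ⊆ P ∨ J ⊆ P) ↔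
      (∀ α β : Γ, (∀ r : R, b α * r * b β ∈ P) → b α ∈ P ∨ b β ∈ P) :=
  serrePrime_iff_basis_condition_general b hpos P hP
end

section
/- Let C be an abelian category in which every object has finite length. Then the Serre subcategories of C are in bijection with the subsets of the set C_s of isomorphism classes of simple objects of C: to a subset X ⊆ C_s corresponds the full subcategory S(X) of objects all of whose Jordan–Hölder simple subquotients lie in X, and every Serre subcategory of C is of this form. -/
open CategoryTheory CategoryTheory.Limits

universe v u

variable {C : Type u} [Category.{v} C] [Abelian C]

/-- A Serre subcategory of an abelian category, given as a set of objects: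
it contains a zero object and is closed under subobjects, quotients and extensions. -/
def IsSerreSub (P : Set C) : Prop :=
  (∃ Z : C, IsZero Z ∧ Z ∈ P) ∧
  (∀ (A B : C) (f : A ⟶ B), Mono f → B ∈ P → A ∈ P) ∧
  (∀ (A B : C) (f : A ⟶ B), Epi f → A ∈ P → B ∈ P) ∧
  (∀ S : ShortComplex C, S.ShortExact → S.X₁ ∈ P → S.X₃ ∈ P → S.X₂ ∈ P)

/-- `S` is a subquotient of `A`. -/
def IsSubquotient (S A : C) : Prop :=
  ∃ (B : C) (i : B ⟶ A) (p : B ⟶ S), Mono i ∧ Epi p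

/-- `S(X)`: the full subcategory of objects all of whose simple subquotients
(equivalently, all of whose Jordan–Hölder factors) lie in `X`. -/
def SofX (X : Set C) : Set C :=
  {A | ∀ S : C, Simple S → IsSubquotient S A → S ∈ X}

/-!
A Serre subcategory `P` is recovered from its simple objects. If every simple subquotient of `A`
lies in `P`, take a maximal subobject `M` of `A` lying in `P` (`A` is Noetherian). If `M ≠ A`,
pick a simple subobject `S` of the Artinian object `A / M`; its preimage in `A` is an extension
of `S` by `M`, hence a strictly larger subobject in `P`. Conversely, `S(X)` is a Serre
subcategory because a simple subquotient of the middle term of a short exact sequence is a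
subquotient of one of its ends, and its simple objects are those of `X` because a simple
subquotient of a simple object is isomorphic to it.
-/

namespace IsSubquotient

section

omit [Abelian C]

lemma refl (A : C) : IsSubquotient A A :=
  ⟨A, 𝟙 A, 𝟙 A, inferInstance, inferInstance⟩

lemma of_mono {S A B : C} (h : IsSubquotient S A) (f : A ⟶ B) [Mono f] : IsSubquotient S B := by
  obtain ⟨D, i, p, _, _⟩ := h
  exact ⟨D, i ≫ f, p, inferInstance, inferInstance⟩

lemma prop {P : ObjectProperty C} [P.IsClosedUnderSubobjects] [P.IsClosedUnderQuotients]
    {S A : C} (h : IsSubquotient S A) (hA : P A) : P S := by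
  obtain ⟨D, i, p, _, _⟩ := h
  exact P.prop_of_epi p (P.prop_of_mono i hA)

end

lemma isZero {S A : C} (h : IsSubquotient S A) (hA : IsZero A) : IsZero S := by
  obtain ⟨D, i, p, _, _⟩ := h
  exact (hA.of_mono i).of_epi p

lemma of_epi {S A B : C} (h : IsSubquotient S B) (f : A ⟶ B) [Epi f] : IsSubquotient S A := by
  obtain ⟨D, i, p, _, _⟩ := h
  exact ⟨pullback i f, pullback.snd i f, pullback.fst i f ≫ p, inferInstance, inferInstance⟩

lemma nonempty_iso_of_simple {S A : C} [Simple S] [Simple A] (h : IsSubquotient S A) :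
    Nonempty (A ≅ S) := by
  obtain ⟨D, i, p, _, _⟩ := h
  have hp : p ≠ 0 := fun h => Simple.not_isZero S (IsZero.of_epi_eq_zero p h)
  have hi : i ≠ 0 := fun h => hp ((IsZero.of_mono_eq_zero i h).eq_of_src _ _)
  have : IsIso i := isIso_of_mono_of_nonzero hi
  have : Simple D := Simple.of_iso (asIso i)
  have : IsIso p := isIso_of_epi_of_nonzero hp
  exact ⟨(asIso i).symm ≪≫ asIso p⟩

lemma of_shortExact {T : C} [Simple T] {S : ShortComplex C} (hS : S.ShortExact)
    (h : IsSubquotient T S.X₂) : IsSubquotient T S.X₁ ∨ IsSubquotient T S.X₃ := by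
  obtain ⟨B, i, p, _, _⟩ := h
  have := hS.mono_f
  -- `kernel (i ≫ S.g)` is `B ∩ S.X₁`: either it maps onto `T`, or `p` factors through
  -- `B / (B ∩ S.X₁) ↪ S.X₃`.
  by_cases hK : kernel.ι (i ≫ S.g) ≫ p = 0
  · right
    have : Epi (cokernel.desc _ p hK) := epi_of_epi_fac (cokernel.π_desc _ _ _)
    exact ⟨_, Abelian.factorThruCoimage (i ≫ S.g), cokernel.desc _ p hK, inferInstance, this⟩
  · left
    have hk : (kernel.ι (i ≫ S.g) ≫ i) ≫ S.g = 0 := by simp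
    have : Mono (hS.exact.lift _ hk) := mono_of_mono_fac (hS.exact.lift_f _ hk)
    exact ⟨_, hS.exact.lift _ hk, _, this, epi_of_nonzero_to_simple hK⟩

end IsSubquotient

lemma isSerreSub_sofX (X : Set C) : IsSerreSub (SofX X) := by
  refine ⟨⟨_, isZero_zero C, ?_⟩, ?_, ?_, ?_⟩
  · intro S _ h
    exact (Simple.not_isZero S (h.isZero (isZero_zero C))).elim
  · intro A B f _ hB S _ h
    exact hB S ‹_› (h.of_mono f)
  · intro A B f _ hA S _ h
    exact hA S ‹_› (h.of_epi f)
  · intro S hS h₁ h₃ T _ h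
    exact (h.of_shortExact hS).elim (h₁ T ‹_›) (h₃ T ‹_›)

lemma setOf_simple_mem_sofX_eq {X : Set C} (hX : ∀ S ∈ X, Simple S)
    (hiso : ∀ S S' : C, S ∈ X → Nonempty (S ≅ S') → S' ∈ X) :
    {S : C | Simple S ∧ S ∈ SofX X} = X := by
  ext S
  refine ⟨fun ⟨hS, hSX⟩ => hSX S hS (.refl S), fun hS => ⟨hX S hS, fun T _ h => ?_⟩⟩
  have := hX S hS
  exact hiso S T hS h.nonempty_iso_of_simple

lemma IsSerreSub.isSerreClass {P : Set C} (hP : IsSerreSub P) :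
    ObjectProperty.IsSerreClass (· ∈ P) where
  exists_zero := hP.1
  prop_of_mono f _ h := hP.2.1 _ _ f ‹_› h
  prop_of_epi f _ h := hP.2.2.1 _ _ f ‹_› h
  prop_X₂_of_shortExact hS h₁ h₃ := hP.2.2.2 _ hS h₁ h₃

namespace CategoryTheory

lemma Subobject.lt_mk_pullback_snd {A S : C} (M : Subobject A) (s : S ⟶ cokernel M.arrow)
    [Mono s] (hS : ¬ IsZero S) : M < Subobject.mk (pullback.snd s (cokernel.π M.arrow)) := by
  refine lt_of_le_not_ge
    (Subobject.le_mk_of_comm (pullback.lift 0 M.arrow (by simp)) (pullback.lift_snd _ _ _))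
    fun hle => hS ?_
  have hfst : pullback.fst s (cokernel.π M.arrow) = 0 := by
    rw [← cancel_mono s, pullback.condition, ← Subobject.ofMkLE_arrow hle, Category.assoc,
      cokernel.condition, comp_zero, zero_comp]
  exact IsZero.of_epi_eq_zero _ hfst

namespace ObjectProperty

variable (P : ObjectProperty C) [P.IsSerreClass]

lemma prop_pullback_of_prop_kernel {A Q S : C} (π : A ⟶ Q) (s : S ⟶ Q) (hK : P (kernel π))
    (hS : P S) : P (pullback s π) := by
  have sq := IsPullback.of_hasPullback s π
  have := isIso_kernel_map_of_isPullback sq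
  exact P.prop_X₂_of_exact (ShortComplex.kernelSequence_exact (pullback.fst s π))
    (P.prop_of_iso (asIso (kernel.map _ _ _ _ sq.w)).symm hK) hS

lemma prop_of_forall_simple_isSubquotient [∀ X : C, IsArtinianObject X] {A : C}
    [IsNoetherianObject A] (hA : ∀ S : C, Simple S → IsSubquotient S A → P S) : P A := by
  obtain ⟨M, hM, hmax⟩ := (wellFounded_gt (α := Subobject A)).has_min {B | P (B : C)}
    ⟨⊥, P.prop_of_isZero ((isZero_zero C).of_iso Subobject.botCoeIsoZero)⟩
  by_cases hQ : IsZero (cokernel M.arrow)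
  · have := Preadditive.epi_of_isZero_cokernel _ hQ
    have := isIso_of_mono_of_epi M.arrow
    exact P.prop_of_iso (asIso M.arrow) hM
  · obtain ⟨S, hS⟩ := exists_simple_subobject hQ
    have hSP : P S :=
      hA _ hS (((IsSubquotient.refl _).of_mono S.arrow).of_epi (cokernel.π M.arrow))
    have hE : P (pullback S.arrow (cokernel.π M.arrow)) :=
      prop_pullback_of_prop_kernel P _ _ (P.prop_of_epi (Abelian.factorThruImage M.arrow) hM) hSP
    exact (hmax _ (P.prop_of_iso (Subobject.underlyingIso _).symm hE)
      (M.lt_mk_pullback_snd S.arrow (Simple.not_isZero _))).elim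

end ObjectProperty

end CategoryTheory

lemma IsSerreSub.eq_sofX [∀ X : C, IsNoetherianObject X] [∀ X : C, IsArtinianObject X]
    {P : Set C} (hP : IsSerreSub P) : P = SofX {S : C | Simple S ∧ S ∈ P} := by
  have := hP.isSerreClass
  ext A
  exact ⟨fun hA S hS h => ⟨hS, h.prop hA⟩, fun hA =>
    ObjectProperty.prop_of_forall_simple_isSubquotient (· ∈ P) fun S hS h => (hA S hS h).2⟩

/-- in an abelian category in which every object has finite length,
the Serre subcategories are in bijection with the (isomorphism-closed) sets of
simple objects: every Serre subcategory `P` equals `S(X)` where `X` is its set of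
simple objects, and conversely for any isomorphism-closed set `X` of simple
objects, `S(X)` is a Serre subcategory whose set of simple objects is `X`. -/
theorem serreSub_correspondence_simples
    [∀ X : C, IsNoetherianObject X] [∀ X : C, IsArtinianObject X] :
    (∀ P : Set C, IsSerreSub P → P = SofX {S : C | Simple S ∧ S ∈ P}) ∧
    (∀ X : Set C, (∀ S ∈ X, Simple S) →
      (∀ S S' : C, S ∈ X → Nonempty (S ≅ S') → S' ∈ X) →
      IsSerreSub (SofX X) ∧ {S : C | Simple S ∧ S ∈ SofX X} = X) :=
  ⟨fun _ hP => hP.eq_sofX,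
    fun _ hX hiso => ⟨isSerreSub_sofX _, setOf_simple_mem_sofX_eq hX hiso⟩⟩
end

section
/- Let R be a ℤ₊-ring and let M ⊆ R₊ \ {0} be a multiplicatively closed subset with I a Serre ideal satisfying I ∩ M = ∅. Then any maximal element of the set of Serre ideals of R containing I and disjoint from M is a Serre prime ideal of R; moreover such a maximal element exists by Zorn's lemma. -/
variable {Γ R : Type*}

/-! Serre ideals are closed under sums and under unions of nonempty chains, so Zorn's lemma
gives a maximal one containing `I` and disjoint from `M`. If such a `P` were not prime, with
`A * B ⊆ P`, `A ⊄ P`, `B ⊄ P`, then by maximality `A + P` and `B + P` both meet `M`, and the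
product of the two elements of `M` found there lies in `(A + P) * (B + P) ⊆ P`, contradicting
`P ∩ M = ∅` because `M` is multiplicatively closed. -/

open scoped Pointwise

namespace IsSerreIdeal

variable [NonUnitalRing R] {b : Module.Basis Γ ℤ R} {A B P : Set R}

lemma zero_mem (hA : IsSerreIdeal b A) : (0 : R) ∈ A := by
  obtain ⟨⟨Γ', rfl⟩, -, -⟩ := hA
  exact Submodule.zero_mem _

lemma add_mem (hA : IsSerreIdeal b A) {x y : R} (hx : x ∈ A) (hy : y ∈ A) : x + y ∈ A := by
  obtain ⟨⟨Γ', rfl⟩, -, -⟩ := hA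
  exact Submodule.add_mem _ hx hy

lemma mul_mem_left (hA : IsSerreIdeal b A) (s : R) {r : R} (hr : r ∈ A) : s * r ∈ A :=
  hA.2.1 r hr s

lemma mul_mem_right (hA : IsSerreIdeal b A) {r : R} (hr : r ∈ A) (s : R) : r * s ∈ A :=
  hA.2.2 r hr s

lemma add (hA : IsSerreIdeal b A) (hP : IsSerreIdeal b P) : IsSerreIdeal b (A + P) := by
  obtain ⟨ΓA, hAeq⟩ := hA.1
  obtain ⟨ΓP, hPeq⟩ := hP.1
  refine ⟨⟨ΓA ∪ ΓP, ?_⟩, ?_, ?_⟩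
  · rw [Set.image_union, Submodule.span_union, Submodule.coe_sup, hAeq, hPeq]
  · rintro _ ⟨a, ha, p, hp, rfl⟩ s
    exact ⟨s * a, hA.mul_mem_left s ha, s * p, hP.mul_mem_left s hp, (mul_add s a p).symm⟩
  · rintro _ ⟨a, ha, p, hp, rfl⟩ s
    exact ⟨a * s, hA.mul_mem_right ha s, p * s, hP.mul_mem_right hp s, (add_mul a p s).symm⟩

lemma add_mul_add_mem (hP : IsSerreIdeal b P) (hAB : ∀ x ∈ A, ∀ y ∈ B, x * y ∈ P)
    {a p c q : R} (ha : a ∈ A) (hp : p ∈ P) (hc : c ∈ B) (hq : q ∈ P) :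
    (a + p) * (c + q) ∈ P := by
  rw [add_mul, mul_add, mul_add]
  exact hP.add_mem (hP.add_mem (hAB a ha c hc) (hP.mul_mem_left a hq))
    (hP.add_mem (hP.mul_mem_right hp c) (hP.mul_mem_right hp q))

lemma sUnion_of_isChain {c : Set (Set R)} (hc : ∀ K ∈ c, IsSerreIdeal b K)
    (hchain : IsChain (· ⊆ ·) c) (hne : c.Nonempty) : IsSerreIdeal b (⋃₀ c) := by
  have : Nonempty c := hne.to_subtype
  choose f hf using fun K : c => (hc K K.2).1
  have hdir : Directed (· ≤ ·) fun K : c => Submodule.span ℤ (b '' f K) := by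
    intro K K'
    simp only [← SetLike.coe_subset_coe, ← hf]
    rcases hchain.total K.2 K'.2 with h | h
    · exact ⟨K', h, le_rfl⟩
    · exact ⟨K, le_rfl, h⟩
  refine ⟨⟨⋃ K : c, f K, ?_⟩, ?_, ?_⟩
  · rw [Set.image_iUnion, Submodule.span_iUnion, Submodule.coe_iSup_of_directed _ hdir,
      Set.sUnion_eq_iUnion]
    exact Set.iUnion_congr hf
  · rintro r ⟨K, hK, hr⟩ s
    exact ⟨K, hK, (hc K hK).mul_mem_left s hr⟩
  · rintro r ⟨K, hK, hr⟩ s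
    exact ⟨K, hK, (hc K hK).mul_mem_right hr s⟩

end IsSerreIdeal

section MultiplicativeSet

variable [NonUnitalRing R] {b : Module.Basis Γ ℤ R} {M P : Set R}

lemma IsSerreIdeal.add_inter_nonempty_of_maximal (hP : IsSerreIdeal b P)
    (hmax : ∀ K : Set R, IsSerreIdeal b K → K ∩ M = ∅ → P ⊆ K → K = P)
    {A : Set R} (hA : IsSerreIdeal b A) (hAP : ¬A ⊆ P) : ((A + P) ∩ M).Nonempty := by
  rw [Set.nonempty_iff_ne_empty]
  intro hdisj
  have hPA : P ⊆ A + P := Set.subset_add_right P hA.zero_mem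
  exact hAP (hmax _ (hA.add hP) hdisj hPA ▸ Set.subset_add_left A hP.zero_mem)

lemma isSerrePrime_of_maximal_disjoint (hMne : M.Nonempty)
    (hMmul : ∀ m ∈ M, ∀ m' ∈ M, m * m' ∈ M) (hP : IsSerreIdeal b P) (hPM : P ∩ M = ∅)
    (hmax : ∀ K : Set R, IsSerreIdeal b K → K ∩ M = ∅ → P ⊆ K → K = P) :
    IsSerrePrime b P := by
  refine ⟨hP, ?_, fun A B hA hB hAB => ?_⟩
  · rintro rfl
    simp [Set.univ_inter, hMne.ne_empty] at hPM
  · by_contra! ⟨hAP, hBP⟩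
    obtain ⟨_, ⟨a, ha, p, hp, rfl⟩, hm⟩ := hP.add_inter_nonempty_of_maximal hmax hA hAP
    obtain ⟨_, ⟨c, hc, q, hq, rfl⟩, hm'⟩ := hP.add_inter_nonempty_of_maximal hmax hB hBP
    have hprod : (a + p) * (c + q) ∈ P ∩ M :=
      ⟨hP.add_mul_add_mem hAB ha hp hc hq, hMmul _ hm _ hm'⟩
    simp [hPM] at hprod

lemma exists_maximal_isSerreIdeal_disjoint {I : Set R} (hI : IsSerreIdeal b I)
    (hdisj : I ∩ M = ∅) :
    ∃ P, I ⊆ P ∧ Maximal (· ∈ {K : Set R | IsSerreIdeal b K ∧ K ∩ M = ∅}) P := by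
  refine zorn_subset_nonempty _ (fun c hcS hchain hne => ?_) I ⟨hI, hdisj⟩
  refine ⟨⋃₀ c, ⟨IsSerreIdeal.sUnion_of_isChain (fun K hK => (hcS hK).1) hchain hne, ?_⟩,
    fun _ => Set.subset_sUnion_of_mem⟩
  rw [Set.eq_empty_iff_forall_notMem]
  rintro x ⟨⟨K, hK, hxK⟩, hxM⟩
  exact (hcS hK).2.subset ⟨hxK, hxM⟩

end MultiplicativeSet

theorem maximal_serreIdeal_disjoint_from_mult_set_is_prime_general
    [NonUnitalRing R] (b : Module.Basis Γ ℤ R)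
    (M : Set R) (hMne : M.Nonempty)
    (hMmul : ∀ m ∈ M, ∀ m' ∈ M, m * m' ∈ M)
    (I : Set R) (hI : IsSerreIdeal b I) (hdisj : I ∩ M = ∅) :
    (∀ P : Set R, IsSerreIdeal b P → I ⊆ P → P ∩ M = ∅ →
      (∀ K : Set R, IsSerreIdeal b K → I ⊆ K → K ∩ M = ∅ → P ⊆ K → K = P) →
      IsSerrePrime b P) ∧
    ∃ P : Set R, IsSerreIdeal b P ∧ I ⊆ P ∧ P ∩ M = ∅ ∧
      ∀ K : Set R, IsSerreIdeal b K → I ⊆ K → K ∩ M = ∅ → P ⊆ K → K = P := by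
  refine ⟨fun P hP hIP hPM hmax => isSerrePrime_of_maximal_disjoint hMne hMmul hP hPM
    fun K hK hKM hPK => hmax K hK (hIP.trans hPK) hKM hPK, ?_⟩
  obtain ⟨P, hIP, hmax⟩ := exists_maximal_isSerreIdeal_disjoint hI hdisj
  exact ⟨P, hmax.prop.1, hIP, hmax.prop.2,
    fun K hK _ hKM hPK => (hmax.eq_of_subset ⟨hK, hKM⟩ hPK).symm⟩

/-- let `M ⊆ R₊ \ {0}` be a nonempty multiplicatively closed set and
`I` a Serre ideal with `I ∩ M = ∅`. Then every maximal element of the set of Serre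
ideals containing `I` and disjoint from `M` is Serre prime, and such a maximal
element exists. -/
theorem maximal_serreIdeal_disjoint_from_mult_set_is_prime
    [NonUnitalRing R] (b : Module.Basis Γ ℤ R) (hpos : PosBasis b)
    (M : Set R) (hMne : M.Nonempty) (hM : M ⊆ ZPos b \ {0})
    (hMmul : ∀ m ∈ M, ∀ m' ∈ M, m * m' ∈ M)
    (I : Set R) (hI : IsSerreIdeal b I) (hdisj : I ∩ M = ∅) :
    (∀ P : Set R, IsSerreIdeal b P → I ⊆ P → P ∩ M = ∅ →
      (∀ K : Set R, IsSerreIdeal b K → I ⊆ K → K ∩ M = ∅ → P ⊆ K → K = P) →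
      IsSerrePrime b P) ∧
    ∃ P : Set R, IsSerreIdeal b P ∧ I ⊆ P ∧ P ∩ M = ∅ ∧
      ∀ K : Set R, IsSerreIdeal b K → I ⊆ K → K ∩ M = ∅ → P ⊆ K → K = P :=
  maximal_serreIdeal_disjoint_from_mult_set_is_prime_general b M hMne hMmul I hI hdisj
end
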